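/- arXiv:2512.09280 — 5 statements merged into one kernel-verified Lean document; each statement's English description precedes it below -/
import Mathlib

section
/- Newman's lemma: if a binary relation r on a type α is terminating (the inverse relation fun b a => r a b is well-founded) and locally confluent (for all a b c, r a b and r a c imply b and c are Joinable), then r is confluent. -/
namespace Metatheory

def Star {α : Type*} (r : α → α → Prop) : α → α → Prop :=
  Relation.ReflTransGen r

def Joinable {α : Type*} (r : α → α → Prop) (b c : α) : Prop :=
  ∃ d, Star r b d ∧ Star r c d

def Confluent {α : Type*} (r : α → α → Prop) : Prop :=
  ∀ a b c, Star r a b → Star r a c → Joinable r b c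

def Terminating {α : Type*} (r : α → α → Prop) : Prop :=
  WellFounded (fun b a => r a b)

def LocallyConfluent {α : Type*} (r : α → α → Prop) : Prop :=
  ∀ a b c, r a b → r a c → Joinable r b c

theorem newman {α : Type*} (r : α → α → Prop)
    (hterm : Terminating r) (hlc : LocallyConfluent r) : Confluent r := by
  intro a
  induction a using hterm.induction with
  | _ a ih =>
    intro b c hab hac
    rcases hab.cases_head with rfl | ⟨b₁, hab₁, hb₁b⟩
    · exact ⟨c, hac, .refl⟩
    rcases hac.cases_head with rfl | ⟨c₁, hac₁, hc₁c⟩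
    · exact ⟨b, .refl, hab⟩
    obtain ⟨d, hb₁d, hc₁d⟩ := hlc a b₁ c₁ hab₁ hac₁
    obtain ⟨e, hbe, hde⟩ := ih b₁ hab₁ b d hb₁b hb₁d
    obtain ⟨f, hcf, hef⟩ := ih c₁ hac₁ c e hc₁c (Relation.ReflTransGen.trans hc₁d hde)
    exact ⟨f, Relation.ReflTransGen.trans hbe hef, hcf⟩

end Metatheory
end

section
/- Hindley-Rosen lemma: if binary relations r and s on a type α are each confluent, and r and s commute (whenever Star r a b and Star s a c, there exists d with Star s b d and Star r c d), then their union (fun a b => r a b ∨ s a b) is confluent. -/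
namespace Metatheory

def Commute {α : Type*} (r s : α → α → Prop) : Prop :=
  ∀ a b c, Star r a b → Star s a c → ∃ d, Star s b d ∧ Star r c d

/-! The relation `Star r ⊔ Star s` has the diamond property: its four cases are confluence of `r`,
confluence of `s` and commutation (twice). Its reflexive-transitive closure is that of `r ⊔ s`,
and the diamond property implies confluence. -/

open Relation

section

variable {α : Type*} {r s : α → α → Prop}

theorem star_sup_star (r s : α → α → Prop) : Star (Star r ⊔ Star s) = Star (r ⊔ s) :=
  le_antisymm (reflTransGen_closed (sup_le (ReflTransGen.mono le_sup_left)
      (ReflTransGen.mono le_sup_right)))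
    (ReflTransGen.mono (sup_le_sup (fun _ _ => .single) (fun _ _ => .single)))

theorem confluent_congr_star (h : Star r = Star s) : Confluent r ↔ Confluent s := by
  unfold Confluent Joinable
  rw [h]

theorem Confluent.of_diamond (h : ∀ a b c, r a b → r a c → Join r b c) : Confluent r :=
  fun _ _ _ hab hac => church_rosser
    (fun a b c hb hc => (h a b c hb hc).imp fun _ hd => ⟨.single hd.1, .single hd.2⟩) hab hac

theorem join_sup_star (hr : Confluent r) (hs : Confluent s) (hrs : Commute r s) (a b c : α) :
    (Star r ⊔ Star s) a b → (Star r ⊔ Star s) a c → Join (Star r ⊔ Star s) b c := by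
  rintro (hb | hb) (hc | hc)
  · obtain ⟨d, hbd, hcd⟩ := hr a b c hb hc
    exact ⟨d, .inl hbd, .inl hcd⟩
  · obtain ⟨d, hbd, hcd⟩ := hrs a b c hb hc
    exact ⟨d, .inr hbd, .inl hcd⟩
  · obtain ⟨d, hcd, hbd⟩ := hrs a c b hc hb
    exact ⟨d, .inl hbd, .inr hcd⟩
  · obtain ⟨d, hbd, hcd⟩ := hs a b c hb hc
    exact ⟨d, .inr hbd, .inr hcd⟩

end

theorem hindley_rosen {α : Type*} (r s : α → α → Prop)
    (hr : Confluent r) (hs : Confluent s) (hc : Commute r s) :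
    Confluent (fun a b => r a b ∨ s a b) :=
  (confluent_congr_star (star_sup_star r s)).1 (.of_diamond (join_sup_star hr hs hc))

end Metatheory
end

section
/- Confluence of combinatory logic: the single-step reduction relation on combinatory logic terms generated by K x y → x and S x y z → x z (y z) under congruence closure is confluent: if Star Red M N₁ and Star Red M N₂, then there exists P with Star Red N₁ P and Star Red N₂ P. -/
/-!
Tait–Martin-Löf's method with Takahashi's complete development. Parallel reduction `ParRed`
contracts any set of redexes at once; it contains `Red` and is contained in `Star Red`, so both
have the same reflexive-transitive closure. Each term `M` has a complete development `dev M`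
contracting all of its redexes, and every parallel reduct of `M` reduces in parallel to `dev M`.
Hence `ParRed` has the diamond property, which passes to its reflexive-transitive closure.
-/

namespace Metatheory

inductive CTerm where
  | S : CTerm
  | K : CTerm
  | app : CTerm → CTerm → CTerm

inductive Red : CTerm → CTerm → Prop where
  | k {x y : CTerm} : Red (.app (.app .K x) y) x
  | s {x y z : CTerm} :
      Red (.app (.app (.app .S x) y) z) (.app (.app x z) (.app y z))
  | appL {M M' N : CTerm} : Red M M' → Red (.app M N) (.app M' N)
  | appR {M N N' : CTerm} : Red N N' → Red (.app M N) (.app M N')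

open Relation

inductive ParRed : CTerm → CTerm → Prop where
  | S : ParRed .S .S
  | K : ParRed .K .K
  | k {x x' y : CTerm} : ParRed x x' → ParRed (.app (.app .K x) y) x'
  | s {x x' y y' z z' : CTerm} : ParRed x x' → ParRed y y' → ParRed z z' →
      ParRed (.app (.app (.app .S x) y) z) (.app (.app x' z') (.app y' z'))
  | app {M M' N N' : CTerm} : ParRed M M' → ParRed N N' → ParRed (.app M N) (.app M' N')

theorem ParRed.refl : ∀ M, ParRed M M
  | .S => .S
  | .K => .K
  | .app M N => .app (ParRed.refl M) (ParRed.refl N)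

theorem Red.parRed {M N : CTerm} (h : Red M N) : ParRed M N := by
  induction h with
  | k => exact .k (.refl _)
  | s => exact .s (.refl _) (.refl _) (.refl _)
  | appL _ ih => exact .app ih (.refl _)
  | appR _ ih => exact .app (.refl _) ih

theorem starRed_app {M M' N N' : CTerm} (hM : Star Red M M') (hN : Star Red N N') :
    Star Red (.app M N) (.app M' N') :=
  ReflTransGen.trans (hM.lift (CTerm.app · N) fun _ _ => Red.appL)
    (hN.lift (CTerm.app M' ·) fun _ _ => Red.appR)

theorem ParRed.starRed {M N : CTerm} (h : ParRed M N) : Star Red M N := by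
  induction h with
  | S | K => exact .refl
  | k _ ih => exact .head Red.k ih
  | s _ _ _ ihx ihy ihz =>
    exact .head Red.s (starRed_app (starRed_app ihx ihz) (starRed_app ihy ihz))
  | app _ _ ihM ihN => exact starRed_app ihM ihN

theorem starRed_eq_reflTransGen_parRed : Star Red = ReflTransGen ParRed :=
  le_antisymm (ReflTransGen.mono fun _ _ => Red.parRed)
    (reflTransGen_closed fun _ _ => ParRed.starRed)

def dev : CTerm → CTerm
  | .S => .S
  | .K => .K
  | .app (.app .K x) _ => dev x
  | .app (.app (.app .S x) y) z => .app (.app (dev x) (dev z)) (.app (dev y) (dev z))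
  | .app M N => .app (dev M) (dev N)

/-- Applying `M` creates a new redex only when `M` is `K x` or `S x y`; otherwise `dev` acts
componentwise. -/
theorem ParRed.app_dev {M M' N N' : CTerm} (hM : ParRed M M') (hMdev : ParRed M' (dev M))
    (hNdev : ParRed N' (dev N)) : ParRed (.app M' N') (dev (.app M N)) := by
  cases hM with
  | app hA _ =>
    cases hA with
    | K =>
      cases hMdev with
      | app _ hB => exact .k hB
    | app hC _ =>
      cases hC with
      | S =>
        cases hMdev with
        | app hSD hB =>
          cases hSD with
          | app _ hD => exact .s hD hB hNdev
      | _ => exact .app hMdev hNdev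
    | _ => exact .app hMdev hNdev
  | _ => exact .app hMdev hNdev

theorem ParRed.to_dev {M N : CTerm} (h : ParRed M N) : ParRed N (dev M) := by
  induction h with
  | S => exact .S
  | K => exact .K
  | k _ ih => exact ih
  | s _ _ _ ihx ihy ihz => exact .app (.app ihx ihz) (.app ihy ihz)
  | app hM _ ihM ihN => exact hM.app_dev ihM ihN

theorem cl_confluent {M N₁ N₂ : CTerm}
    (h₁ : Star Red M N₁) (h₂ : Star Red M N₂) :
    ∃ P, Star Red N₁ P ∧ Star Red N₂ P := by
  rw [starRed_eq_reflTransGen_parRed] at h₁ h₂ ⊢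
  exact church_rosser (fun _ _ _ hb hc => ⟨_, .single hb.to_dev, .single hc.to_dev⟩) h₁ h₂

end Metatheory
end

section
/- CR1 for STLC reducibility: for every simple type A and term M, if Reducible A M then M is strongly normalizing (SN M). -/
namespace Metatheory

inductive Term where
  | var : Nat → Term
  | app : Term → Term → Term
  | lam : Term → Term

def shift (d c : Nat) : Term → Term
  | .var n => .var (if n < c then n else n + d)
  | .app M N => .app (shift d c M) (shift d c N)
  | .lam M => .lam (shift d (c + 1) M)

def subst (k : Nat) (N : Term) : Term → Term
  | .var n => if n < k then .var n else if n = k then shift k 0 N else .var (n - 1)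
  | .app M₁ M₂ => .app (subst k N M₁) (subst k N M₂)
  | .lam M => .lam (subst (k + 1) (shift 1 0 N) M)

inductive Beta : Term → Term → Prop where
  | beta {M N : Term} : Beta (.app (.lam M) N) (subst 0 N M)
  | appL {M M' N : Term} : Beta M M' → Beta (.app M N) (.app M' N)
  | appR {M N N' : Term} : Beta N N' → Beta (.app M N) (.app M N')
  | lam {M M' : Term} : Beta M M' → Beta (.lam M) (.lam M')

inductive Ty where
  | base : Nat → Ty
  | arr : Ty → Ty → Ty

inductive Typing : List Ty → Term → Ty → Prop where
  | var {Γ : List Ty} {n : Nat} {A : Ty} :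
      Γ[n]? = some A → Typing Γ (.var n) A
  | lam {Γ : List Ty} {M : Term} {A B : Ty} :
      Typing (A :: Γ) M B → Typing Γ (.lam M) (.arr A B)
  | app {Γ : List Ty} {M N : Term} {A B : Ty} :
      Typing Γ M (.arr A B) → Typing Γ N A → Typing Γ (.app M N) B

def SN (M : Term) : Prop := Acc (fun N M => Beta M N) M

def Reducible : Ty → Term → Prop
  | .base _, M => SN M
  | .arr A B, M => ∀ N, Reducible A N → Reducible B (.app M N)

def Neutral : Term → Prop
  | .lam _ => False
  | _ => True

theorem sn_appL {M N : Term} (h : SN (.app M N)) : SN M := by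
  generalize eq : Term.app M N = P at h
  induction h generalizing M N with
  | intro P hP ih =>
    subst eq
    exact Acc.intro M fun M' hb => ih _ (Beta.appL hb) rfl

theorem crs (A : Ty) :
    (∀ M, Reducible A M → SN M) ∧
    (∀ M M', Reducible A M → Beta M M' → Reducible A M') ∧
    (∀ M, Neutral M → (∀ M', Beta M M' → Reducible A M') → Reducible A M) := by
  induction A with
  | base n =>
    exact ⟨fun M h => h, fun M M' h hb => h.inv hb, fun M _ h => Acc.intro M h⟩
  | arr A B ihA ihB =>
    obtain ⟨cr1A, cr2A, cr3A⟩ := ihA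
    obtain ⟨cr1B, cr2B, cr3B⟩ := ihB
    have varRed : ∀ n, Reducible A (.var n) := fun n =>
      cr3A _ trivial (fun M' hb => nomatch hb)
    refine ⟨?_, ?_, ?_⟩
    · intro M h
      exact sn_appL (cr1B _ (h _ (varRed 0)))
    · intro M M' h hb N hN
      exact cr2B _ _ (h N hN) (Beta.appL hb)
    · intro M hneu hred
      have key : ∀ N, SN N → Reducible A N → Reducible B (.app M N) := by
        intro N snN
        induction snN with
        | intro N hacc ih =>
          intro hN
          refine cr3B _ trivial ?_
          intro P hb
          cases hb with
          | beta => exact False.elim hneu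
          | appL hb' => exact hred _ hb' N hN
          | appR hb' => exact ih _ hb' (cr2A _ _ hN hb')
      exact fun N hN => key N (cr1A N hN) hN

theorem cr1 (A : Ty) (M : Term) (h : Reducible A M) : SN M :=
  (crs A).1 M h

end Metatheory
end

section
/- CR2 for STLC reducibility: for every simple type A and terms M, N, if Reducible A M and Beta M N then Reducible A N. -/
namespace Metatheory

theorem cr2 (A : Ty) (M N : Term) (h : Reducible A M) (hred : Beta M N) :
    Reducible A N := by
  induction A generalizing M N with
  | base n => exact h.inv hred
  | arr A B ihA ihB =>
    intro P hP
    exact ihB _ _ (h P hP) (Beta.appL hred)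

end Metatheory
end
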